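/- Let F be a finite field with |F| = q elements and char(F) ≠ 2. For all integers l ≥ 0 and n ≥ 0, the polynomial l·y_1⋯y_n(y_{n+1}^{q+l−1} − y_{n+1}^l) + y_1^q⋯y_n^q y_{n+1}^l belongs to V + Id(UT_2(F), ⋆). -/

import Mathlib

open scoped BigOperators

set_option maxHeartbeats 1000000
set_option synthInstance.maxHeartbeats 400000

/-- The algebra of 2×2 upper triangular matrices over `F`. -/
def UT2 (F : Type*) [Field F] : Subalgebra F (Matrix (Fin 2) (Fin 2) F) where
  carrier := {M | M 1 0 = 0}
  mul_mem' := by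
    intro a b ha hb
    simp only [Set.mem_setOf_eq] at *
    rw [Matrix.mul_apply, Fin.sum_univ_two, ha, hb]
    ring
  one_mem' := by simp [Matrix.one_apply]
  add_mem' := by
    intro a b ha hb
    simp only [Set.mem_setOf_eq] at *
    simp [Matrix.add_apply, ha, hb]
  zero_mem' := by simp
  algebraMap_mem' := by
    intro r
    simp [Matrix.algebraMap_matrix_apply]

theorem mem_UT2 (F : Type*) [Field F] {M : Matrix (Fin 2) (Fin 2) F} :
    M ∈ UT2 F ↔ M 1 0 = 0 := Iff.rfl

/-- The involution `⋆` on `UT2 F`: `(a c; 0 b) ↦ (b c; 0 a)`. -/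
def starUT (F : Type*) [Field F] (M : ↥(UT2 F)) : ↥(UT2 F) :=
  ⟨!![M.1 1 1, M.1 0 1; 0, M.1 0 0], by rw [mem_UT2]; simp⟩

/-- The involution `s` on `UT2 F`: `(a c; 0 b) ↦ (b -c; 0 a)`. -/
def starS (F : Type*) [Field F] (M : ↥(UT2 F)) : ↥(UT2 F) :=
  ⟨!![M.1 1 1, -(M.1 0 1); 0, M.1 0 0], by rw [mem_UT2]; simp⟩

/-- The free unital associative `F`-algebra `F⟨Y ∪ Z⟩` on the variables
`y_0, y_1, …` (indexed by `Sum.inl`) and `z_0, z_1, …` (indexed by `Sum.inr`). -/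
abbrev FA (F : Type*) [Field F] := FreeAlgebra F (ℕ ⊕ ℕ)

noncomputable def yv (F : Type*) [Field F] (i : ℕ) : FA F := FreeAlgebra.ι F (Sum.inl i)
noncomputable def zv (F : Type*) [Field F] (i : ℕ) : FA F := FreeAlgebra.ι F (Sum.inr i)

noncomputable def fStarAux (F : Type*) [Field F] : FA F →ₐ[F] (FA F)ᵐᵒᵖ :=
  FreeAlgebra.lift F fun v =>
    MulOpposite.op (Sum.elim (fun i => FreeAlgebra.ι F (Sum.inl i))
      (fun i => -FreeAlgebra.ι F (Sum.inr i)) v)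

/-- The involution `*` on `F⟨Y ∪ Z⟩`: the unique `F`-linear anti-automorphism
with `y_i* = y_i` and `z_i* = -z_i`. -/
noncomputable def fStar (F : Type*) [Field F] (f : FA F) : FA F := (fStarAux F f).unop

/-- A symmetric polynomial of `F⟨Y ∪ Z⟩`. -/
def IsSym (F : Type*) [Field F] (f : FA F) : Prop := fStar F f = f
/-- A skew polynomial of `F⟨Y ∪ Z⟩`. -/
def IsSkew (F : Type*) [Field F] (f : FA F) : Prop := fStar F f = -f

/-- A substitution relative to an involution `σ` on `UT2 F`: an algebra homomorphism
sending each `y_i` to a symmetric element and each `z_i` to a skew-symmetric element. -/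
def IsSubstWith (F : Type*) [Field F] (σ : ↥(UT2 F) → ↥(UT2 F))
    (φ : FA F →ₐ[F] ↥(UT2 F)) : Prop :=
  (∀ i, σ (φ (yv F i)) = φ (yv F i)) ∧ (∀ i, σ (φ (zv F i)) = -(φ (zv F i)))

/-- The `*`-polynomial identities of `(UT2 F, σ)`. -/
def IdWith (F : Type*) [Field F] (σ : ↥(UT2 F) → ↥(UT2 F)) : Submodule F (FA F) where
  carrier := {f | ∀ φ : FA F →ₐ[F] ↥(UT2 F), IsSubstWith F σ φ → φ f = 0}
  add_mem' := by
    intro a b ha hb φ hφ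
    rw [map_add, ha φ hφ, hb φ hφ, add_zero]
  zero_mem' := by intro φ _; exact map_zero φ
  smul_mem' := by
    intro c x hx φ hφ
    rw [map_smul, hx φ hφ, smul_zero]

/-- The `*`-central polynomials of `(UT2 F, σ)`. -/
def CWith (F : Type*) [Field F] (σ : ↥(UT2 F) → ↥(UT2 F)) : Submodule F (FA F) where
  carrier := {f | ∀ φ : FA F →ₐ[F] ↥(UT2 F), IsSubstWith F σ φ →
    φ f ∈ Subalgebra.center F ↥(UT2 F)}
  add_mem' := by
    intro a b ha hb φ hφ
    rw [map_add]; exact add_mem (ha φ hφ) (hb φ hφ)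
  zero_mem' := by intro φ _; rw [map_zero]; exact zero_mem _
  smul_mem' := by
    intro c x hx φ hφ
    rw [map_smul]; exact Subalgebra.smul_mem _ (hx φ hφ) c

/-- `⟨z₁z₂⟩^{TS(*)}`: the `F`-linear span of all products of two skew polynomials. -/
def TSz (F : Type*) [Field F] : Submodule F (FA F) :=
  Submodule.span F {f : FA F | ∃ u v, IsSkew F u ∧ IsSkew F v ∧ f = u * v}

/-- `V`: the `F`-linear span of all polynomials
`l·g₁(g₂^{q+l-1} - g₂^l) + g₁^q g₂^l` with `l ∈ ℕ` and `g₁, g₂` symmetric. -/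
def Vspan (F : Type*) [Field F] (q : ℕ) : Submodule F (FA F) :=
  Submodule.span F {f : FA F | ∃ l : ℕ, ∃ g₁ g₂, IsSym F g₁ ∧ IsSym F g₂ ∧
    f = (l : F) • (g₁ * (g₂ ^ (q + l - 1) - g₂ ^ l)) + g₁ ^ q * g₂ ^ l}

/-! Symmetric elements of `(UT₂(F), ⋆)` have equal diagonal entries, so they commute. Hence
under every `⋆`-substitution `φ` the monomial `P = y₁⋯yₙ` and its reversal `P*` have the same
image, and `y₁^q⋯yₙ^q` is sent to `φ(P)^q`. With `g₁ = (P + P*)/2` (possible as `char F ≠ 2`) and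
`g₂ = y_{n+1}`, the generator of `V` built from `g₁, g₂` therefore differs from the given
polynomial by a `⋆`-identity. -/

theorem List.prod_reverse_of_pairwise_commute {M : Type*} [Monoid M] {L : List M}
    (hL : L.Pairwise Commute) : L.reverse.prod = L.prod :=
  ((List.reverse_perm L).symm.prod_eq' hL).symm

theorem List.prod_pow_of_pairwise_commute {M : Type*} [Monoid M] {L : List M}
    (hL : L.Pairwise Commute) (m : ℕ) : L.prod ^ m = (L.map (· ^ m)).prod := by
  induction L with
  | nil => simp
  | cons a t ih =>
    rw [List.pairwise_cons] at hL
    rw [List.prod_cons, (Commute.list_prod_right t a hL.1).mul_pow, ih hL.2]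
    rfl

section FreeStar

variable (F : Type*) [Field F]

theorem fStar_mul (a b : FA F) : fStar F (a * b) = fStar F b * fStar F a := by
  simp [fStar]

theorem fStar_add (a b : FA F) : fStar F (a + b) = fStar F a + fStar F b := by
  simp [fStar]

theorem fStar_smul (c : F) (a : FA F) : fStar F (c • a) = c • fStar F a := by
  simp [fStar]

theorem fStar_yv (i : ℕ) : fStar F (yv F i) = yv F i := by
  simp [fStar, fStarAux, yv]

theorem fStar_fStar (f : FA F) : fStar F (fStar F f) = f := by
  induction f using FreeAlgebra.induction with
  | grade0 c => simp [fStar]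
  | grade1 v => cases v <;> simp [fStar, fStarAux]
  | mul a b ha hb => rw [fStar_mul, fStar_mul, ha, hb]
  | add a b ha hb => rw [fStar_add, fStar_add, ha, hb]

theorem isSym_smul_add_fStar (c : F) (f : FA F) : IsSym F (c • (f + fStar F f)) := by
  rw [IsSym, fStar_smul, fStar_add, fStar_fStar, add_comm]

theorem fStar_list_prod (L : List (FA F)) : fStar F L.prod = (L.map (fStar F)).reverse.prod :=
  unop_map_list_prod (fStarAux F) L

end FreeStar

theorem commute_of_starUT_eq_self (F : Type*) [Field F] {A B : UT2 F}
    (hA : starUT F A = A) (hB : starUT F B = B) : Commute A B := by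
  have diag_eq {C : UT2 F} (hC : starUT F C = C) : C.1 0 0 = C.1 1 1 := by
    simpa [starUT] using (congrArg (fun M : UT2 F => M.1 0 0) hC).symm
  have hA₀ := (mem_UT2 F).1 A.2
  have hB₀ := (mem_UT2 F).1 B.2
  have hA₁ := diag_eq hA
  have hB₁ := diag_eq hB
  refine Subtype.ext (Matrix.ext fun i j => ?_)
  fin_cases i <;> fin_cases j <;>
    simp [Matrix.mul_apply, hA₀, hB₀, hA₁, hB₁, mul_comm, add_comm]

namespace IsSubstWith

variable {F : Type*} [Field F] {φ : FA F →ₐ[F] UT2 F}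

theorem pairwise_commute_ofFn_yv (hφ : IsSubstWith F (starUT F) φ) (n : ℕ) :
    (List.ofFn fun i : Fin n => φ (yv F i)).Pairwise Commute :=
  List.pairwise_ofFn.2 fun i j _ => commute_of_starUT_eq_self F (hφ.1 i) (hφ.1 j)

theorem map_fStar_prod_yv (hφ : IsSubstWith F (starUT F) φ) (n : ℕ) :
    φ (fStar F (List.ofFn fun i : Fin n => yv F i).prod) =
      φ (List.ofFn fun i : Fin n => yv F i).prod := by
  simp only [fStar_list_prod, List.map_ofFn, Function.comp_def, fStar_yv, map_list_prod,
    List.map_reverse]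
  exact List.prod_reverse_of_pairwise_commute (hφ.pairwise_commute_ofFn_yv n)

theorem map_prod_yv_pow (hφ : IsSubstWith F (starUT F) φ) (n q : ℕ) :
    φ (List.ofFn fun i : Fin n => yv F i ^ q).prod =
      φ (List.ofFn fun i : Fin n => yv F i).prod ^ q := by
  simp only [map_list_prod, List.map_ofFn, Function.comp_def, map_pow,
    List.prod_pow_of_pairwise_commute (hφ.pairwise_commute_ofFn_yv n)]

end IsSubstWith

theorem stmt_13_general (F : Type*) [Field F] (q : ℕ)
    (hchar : ringChar F ≠ 2) (l n : ℕ) :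
    (l : F) • ((List.ofFn fun i : Fin n => yv F i).prod *
        ((yv F n) ^ (q + l - 1) - (yv F n) ^ l)) +
      (List.ofFn fun i : Fin n => (yv F i) ^ q).prod * (yv F n) ^ l ∈
      Vspan F q ⊔ IdWith F (starUT F) := by
  set P := (List.ofFn fun i : Fin n => yv F i).prod
  set g := (2 : F)⁻¹ • (P + fStar F P)
  set v := (l : F) • (g * (yv F n ^ (q + l - 1) - yv F n ^ l)) + g ^ q * yv F n ^ l
  have hv : v ∈ Vspan F q :=
    Submodule.subset_span ⟨l, g, yv F n, isSym_smul_add_fStar F _ P, fStar_yv F n, rfl⟩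
  refine Submodule.mem_sup.2 ⟨v, hv, _, fun φ hφ => ?_, add_sub_cancel v _⟩
  have hg : φ g = φ P := by
    rw [map_smul, map_add, hφ.map_fStar_prod_yv n, ← two_smul F, smul_smul,
      inv_mul_cancel₀ (Ring.two_ne_zero hchar), one_smul]
  have hPq : φ (List.ofFn fun i : Fin n => yv F i ^ q).prod = φ P ^ q :=
    hφ.map_prod_yv_pow n q
  simp only [v, map_sub, map_add, map_smul, map_mul, map_pow, hg, hPq, sub_self]

theorem stmt_13 (F : Type*) [Field F] [Fintype F] (q : ℕ) (hq : Fintype.card F = q)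
    (hchar : ringChar F ≠ 2) (l n : ℕ) :
    (l : F) • ((List.ofFn fun i : Fin n => yv F i).prod *
        ((yv F n) ^ (q + l - 1) - (yv F n) ^ l)) +
      (List.ofFn fun i : Fin n => (yv F i) ^ q).prod * (yv F n) ^ l ∈
      Vspan F q ⊔ IdWith F (starUT F) :=
  stmt_13_general F q hchar l n
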